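/- arXiv:2106.06027 — 3 statements merged into one kernel-verified Lean document; each statement's English description precedes it below -/
import Mathlib

section
/- Let n, m be positive integers and G : {1,…,n} → {1,…,m} a group assignment of coordinates. Let l, u ∈ ℝ^n with l_i ≤ 0 ≤ u_i for all i, let s ∈ ℝ^n, and let L > 0, λ > 0. Define δ* ∈ ℝ^n groupwise by: for each group j, if ‖s_{G_j}‖² − ‖(Π_{[l,u]}(s) − s)_{G_j}‖² > 2λ/L then δ*_i = Π_{[l,u]}(s)_i for every coordinate i with G(i) = j, and otherwise δ*_i = 0 for every such i. Then δ* lies in the box [l,u], and for every δ in the box [l,u] one has (L/2)‖δ* − s‖² + λ‖δ*‖_{2,0} ≤ (L/2)‖δ − s‖² + λ‖δ‖_{2,0}; that is, δ* is a global minimizer of the group-ℓ0-regularized box-constrained proximal problem. -/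
/-- Componentwise clamp (projection onto the box `[l, u]`). -/
noncomputable def clampProj {n : ℕ} (l u s : Fin n → ℝ) : Fin n → ℝ :=
  fun i => max (l i) (min (u i) (s i))

/-- Membership in the box `[l, u]`. -/
def inBox {n : ℕ} (l u δ : Fin n → ℝ) : Prop :=
  ∀ i, l i ≤ δ i ∧ δ i ≤ u i

/-- The group ℓ_{2,0} "norm": number of groups `j` whose restriction `δ_{G_j}` is nonzero. -/
noncomputable def groupL20 {n m : ℕ} (G : Fin n → Fin m) (δ : Fin n → ℝ) : ℕ :=
  Nat.card {j : Fin m // ∃ i, G i = j ∧ δ i ≠ 0}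

/-! The objective splits into a sum over groups. On group `j` a feasible `δ` either vanishes,
costing `(L/2)‖s_{G_j}‖²`, or does not, costing at least `(L/2)‖(Π(s) − s)_{G_j}‖² + λ`, since
the clamp is the coordinatewise nearest point of the box. The threshold rule makes `δ*` attain
the smaller of these two bounds on every group. -/

open Finset

lemma sub_sq_max_min_le {a b x t : ℝ} (hab : a ≤ b) (hax : a ≤ x) (hxb : x ≤ b) :
    (max a (min b t) - t) ^ 2 ≤ (x - t) ^ 2 := by
  rcases le_total t a with hta | hat
  · rw [min_eq_right (hta.trans hab), max_eq_left hta]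
    nlinarith
  rcases le_total t b with htb | hbt
  · rw [min_eq_right htb, max_eq_right hat]
    simpa using sq_nonneg (x - t)
  · rw [min_eq_left hbt, max_eq_right hab]
    nlinarith

section Box

variable {n : ℕ} {l u : Fin n → ℝ}

lemma inBox_clampProj (hlu : ∀ i, l i ≤ u i) (s : Fin n → ℝ) : inBox l u (clampProj l u s) :=
  fun i => ⟨le_max_left _ _, max_le (hlu i) (min_le_left _ _)⟩

lemma inBox_zero (hlu : ∀ i, l i ≤ 0 ∧ 0 ≤ u i) : inBox l u 0 := hlu

end Box

section GroupCost

variable {n m : ℕ} (G : Fin n → Fin m) (s : Fin n → ℝ) (L lam : ℝ)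

noncomputable def groupSqDist (x : Fin n → ℝ) (j : Fin m) : ℝ :=
  ∑ i ∈ univ.filter (fun i => G i = j), (x i - s i) ^ 2

noncomputable def groupCost (x : Fin n → ℝ) (j : Fin m) : ℝ :=
  L / 2 * groupSqDist G s x j + lam * if ∃ i, G i = j ∧ x i ≠ 0 then 1 else 0

lemma objective_eq_sum_groupCost (x : Fin n → ℝ) :
    L / 2 * (∑ i, (x i - s i) ^ 2) + lam * (groupL20 G x : ℝ) =
      ∑ j, groupCost G s L lam x j := by
  classical
  rw [groupL20, Nat.card_eq_fintype_card, Fintype.card_subtype, ← sum_boole,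
    ← sum_fiberwise univ G, mul_sum, mul_sum, ← sum_add_distrib]
  rfl

variable {G s L lam}

lemma groupSqDist_congr {x y : Fin n → ℝ} {j : Fin m} (h : ∀ i, G i = j → x i = y i) :
    groupSqDist G s x j = groupSqDist G s y j :=
  sum_congr rfl fun i hi => by rw [h i (mem_filter.mp hi).2]

lemma groupCost_of_eq_zero {x : Fin n → ℝ} {j : Fin m} (hx : ∀ i, G i = j → x i = 0) :
    groupCost G s L lam x j = L / 2 * groupSqDist G s 0 j := by
  rw [groupCost, groupSqDist_congr (y := 0) hx, if_neg fun ⟨i, hi, hxi⟩ => hxi (hx i hi), mul_zero,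
    add_zero]

lemma groupSqDist_clampProj_le {l u x : Fin n → ℝ} (hlu : ∀ i, l i ≤ u i) (hx : inBox l u x)
    (j : Fin m) : groupSqDist G s (clampProj l u s) j ≤ groupSqDist G s x j :=
  sum_le_sum fun i _ => sub_sq_max_min_le (hlu i) (hx i).1 (hx i).2

lemma min_le_groupCost {l u x : Fin n → ℝ} (hL : 0 ≤ L) (hlu : ∀ i, l i ≤ u i)
    (hx : inBox l u x) (j : Fin m) :
    min (L / 2 * groupSqDist G s 0 j) (L / 2 * groupSqDist G s (clampProj l u s) j + lam) ≤
      groupCost G s L lam x j := by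
  by_cases hxj : ∃ i, G i = j ∧ x i ≠ 0
  · refine (min_le_right _ _).trans ?_
    rw [groupCost, if_pos hxj, mul_one]
    gcongr
    exact groupSqDist_clampProj_le hlu hx j
  · simp only [not_exists, not_and, not_not] at hxj
    exact (min_le_left _ _).trans (groupCost_of_eq_zero hxj).ge

lemma groupCost_le_min {l u x : Fin n → ℝ} (hL : 0 < L) (hlam : 0 ≤ lam) {j : Fin m}
    (hx : ∀ i, G i = j → x i =
      if groupSqDist G s 0 j - groupSqDist G s (clampProj l u s) j > 2 * lam / L
      then clampProj l u s i else 0) :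
    groupCost G s L lam x j ≤
      min (L / 2 * groupSqDist G s 0 j) (L / 2 * groupSqDist G s (clampProj l u s) j + lam) := by
  split_ifs at hx with hgap
  · have hgap' : 2 * lam < (groupSqDist G s 0 j - groupSqDist G s (clampProj l u s) j) * L :=
      (div_lt_iff₀ hL).mp hgap
    have hind : (if ∃ i, G i = j ∧ x i ≠ 0 then (1 : ℝ) else 0) ≤ 1 := by split_ifs <;> norm_num
    rw [min_eq_right (by nlinarith), groupCost, groupSqDist_congr hx]
    gcongr
    exact mul_le_of_le_one_right hlam hind
  · have hgap' : (groupSqDist G s 0 j - groupSqDist G s (clampProj l u s) j) * L ≤ 2 * lam :=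
      (le_div_iff₀ hL).mp (not_lt.mp hgap)
    rw [groupCost_of_eq_zero hx, min_eq_left (by nlinarith)]

end GroupCost

theorem group_l0_prox_minimizer_general (n m : ℕ)
    (G : Fin n → Fin m)
    (l u s : Fin n → ℝ) (hlu : ∀ i, l i ≤ 0 ∧ 0 ≤ u i)
    (L lam : ℝ) (hL : 0 < L) (hlam : 0 < lam)
    (δstar : Fin n → ℝ)
    (hδstar : ∀ i : Fin n,
      δstar i =
        if (∑ i' ∈ Finset.univ.filter (fun i' => G i' = G i), (s i') ^ 2)
            - (∑ i' ∈ Finset.univ.filter (fun i' => G i' = G i),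
                (clampProj l u s i' - s i') ^ 2) > 2 * lam / L
        then clampProj l u s i else 0) :
    inBox l u δstar ∧
      ∀ δ : Fin n → ℝ, inBox l u δ →
        L / 2 * (∑ i, (δstar i - s i) ^ 2) + lam * (groupL20 G δstar : ℝ) ≤
          L / 2 * (∑ i, (δ i - s i) ^ 2) + lam * (groupL20 G δ : ℝ) := by
  have hlu' : ∀ i, l i ≤ u i := fun i => (hlu i).1.trans (hlu i).2
  refine ⟨fun i => ?_, fun δ hδ => ?_⟩
  · rw [hδstar i]
    split_ifs
    exacts [inBox_clampProj hlu' s i, inBox_zero hlu i]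
  rw [objective_eq_sum_groupCost, objective_eq_sum_groupCost]
  refine sum_le_sum fun j _ => (groupCost_le_min hL hlam.le fun i hi => ?_).trans
    (min_le_groupCost hL.le hlu' hδ j)
  simp only [hδstar i, hi, groupSqDist, Pi.zero_apply, zero_sub, neg_sq]

/-- The groupwise hard-thresholding point `δ*` is a global minimizer of the
group-ℓ0-regularized box-constrained proximal problem. -/
theorem group_l0_prox_minimizer (n m : ℕ) (hn : 0 < n) (hm : 0 < m)
    (G : Fin n → Fin m)
    (l u s : Fin n → ℝ) (hlu : ∀ i, l i ≤ 0 ∧ 0 ≤ u i)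
    (L lam : ℝ) (hL : 0 < L) (hlam : 0 < lam)
    (δstar : Fin n → ℝ)
    (hδstar : ∀ i : Fin n,
      δstar i =
        if (∑ i' ∈ Finset.univ.filter (fun i' => G i' = G i), (s i') ^ 2)
            - (∑ i' ∈ Finset.univ.filter (fun i' => G i' = G i),
                (clampProj l u s i' - s i') ^ 2) > 2 * lam / L
        then clampProj l u s i else 0) :
    inBox l u δstar ∧
      ∀ δ : Fin n → ℝ, inBox l u δ →
        L / 2 * (∑ i, (δstar i - s i) ^ 2) + lam * (groupL20 G δstar : ℝ) ≤
          L / 2 * (∑ i, (δ i - s i) ^ 2) + lam * (groupL20 G δ : ℝ) :=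
  group_l0_prox_minimizer_general n m G l u s hlu L lam hL hlam δstar hδstar
end

section
/- Let n be a positive integer, let l, u ∈ ℝ^n with l_i ≤ 0 ≤ u_i for all i, let s ∈ ℝ^n, and let L > 0, λ > 0. Define δ* ∈ ℝ^n componentwise by: δ*_i = Π_{[l,u]}(s)_i if s_i² − (Π_{[l,u]}(s)_i − s_i)² > 2λ/L, and δ*_i = 0 otherwise. Then δ* lies in the box [l,u], and for every δ in the box [l,u] one has (L/2)‖δ* − s‖² + λ‖δ*‖₀ ≤ (L/2)‖δ − s‖² + λ‖δ‖₀; that is, δ* is a global minimizer of the ℓ0-regularized box-constrained proximal problem. -/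
/-- The ℓ0 "norm": number of nonzero entries. -/
noncomputable def l0norm {n : ℕ} (δ : Fin n → ℝ) : ℕ :=
  Nat.card {i : Fin n // δ i ≠ 0}

lemma l0_cast {n : ℕ} (δ : Fin n → ℝ) :
    (l0norm δ : ℝ) = ∑ i, if δ i ≠ 0 then (1 : ℝ) else 0 := by
  rw [l0norm, Nat.card_eq_fintype_card, Fintype.card_subtype, Finset.card_filter]
  push_cast
  simp

lemma clamp_sq (l u s d : ℝ) (hlu : l ≤ u) (h1 : l ≤ d) (h2 : d ≤ u) :
    (max l (min u s) - s) ^ 2 ≤ (d - s) ^ 2 := by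
  rcases le_total s l with h | h
  · have hc : max l (min u s) = l := by
      rw [min_eq_right (h.trans hlu), max_eq_left h]
    rw [hc]; nlinarith
  rcases le_total u s with h' | h'
  · have hc : max l (min u s) = u := by
      rw [min_eq_left h', max_eq_right hlu]
    rw [hc]; nlinarith
  · have hc : max l (min u s) = s := by
      rw [min_eq_right h', max_eq_right h]
    rw [hc]; nlinarith

lemma key (l u s L lam : ℝ) (hl : l ≤ 0) (hu : 0 ≤ u) (hL : 0 < L) (hlam : 0 < lam)
    (d : ℝ) (h1 : l ≤ d) (h2 : d ≤ u) :
    L / 2 * ((if s ^ 2 - (max l (min u s) - s) ^ 2 > 2 * lam / L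
        then max l (min u s) else 0) - s) ^ 2 +
      lam * (if (if s ^ 2 - (max l (min u s) - s) ^ 2 > 2 * lam / L
        then max l (min u s) else 0) ≠ 0 then (1:ℝ) else 0) ≤
    L / 2 * (d - s) ^ 2 + lam * (if d ≠ 0 then (1:ℝ) else 0) := by
  have hlu : l ≤ u := hl.trans hu
  have hcd : (max l (min u s) - s) ^ 2 ≤ (d - s) ^ 2 := clamp_sq l u s d hlu h1 h2
  by_cases hT : s ^ 2 - (max l (min u s) - s) ^ 2 > 2 * lam / L
  · rw [if_pos hT]
    split_ifs with hc hd hd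
    · nlinarith
    · simp only [not_not] at hd; subst hd
      have h2l : 2 * lam < (s ^ 2 - (max l (min u s) - s) ^ 2) * L :=
        (div_lt_iff₀ hL).mp hT
      nlinarith
    · exfalso
      simp only [not_not] at hc
      rw [hc] at hT
      have : (0:ℝ) < 2 * lam / L := by positivity
      nlinarith
    · exfalso
      simp only [not_not] at hc
      rw [hc] at hT
      have : (0:ℝ) < 2 * lam / L := by positivity
      nlinarith
  · rw [if_neg hT]
    simp only [ne_eq, not_true_eq_false, if_false]
    have h2l : (s ^ 2 - (max l (min u s) - s) ^ 2) * L ≤ 2 * lam :=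
      (le_div_iff₀ hL).mp (not_lt.mp hT)
    split_ifs with hd
    · subst hd
      nlinarith
    · nlinarith

/-- The componentwise hard-thresholding point `δ*` is a global minimizer of the
ℓ0-regularized box-constrained proximal problem. -/
theorem l0_prox_minimizer (n : ℕ) (hn : 0 < n)
    (l u s : Fin n → ℝ) (hlu : ∀ i, l i ≤ 0 ∧ 0 ≤ u i)
    (L lam : ℝ) (hL : 0 < L) (hlam : 0 < lam)
    (δstar : Fin n → ℝ)
    (hδstar : ∀ i : Fin n,
      δstar i =
        if (s i) ^ 2 - (clampProj l u s i - s i) ^ 2 > 2 * lam / L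
        then clampProj l u s i else 0) :
    inBox l u δstar ∧
      ∀ δ : Fin n → ℝ, inBox l u δ →
        L / 2 * (∑ i, (δstar i - s i) ^ 2) + lam * (l0norm δstar : ℝ) ≤
          L / 2 * (∑ i, (δ i - s i) ^ 2) + lam * (l0norm δ : ℝ) := by
  constructor
  · intro i
    rw [hδstar i]
    split_ifs with hT
    · exact ⟨le_max_left _ _,
        max_le ((hlu i).1.trans (hlu i).2) (min_le_left _ _)⟩
    · exact ⟨(hlu i).1, (hlu i).2⟩
  · intro δ hδ
    rw [l0_cast, l0_cast, Finset.mul_sum, Finset.mul_sum, Finset.mul_sum,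
      Finset.mul_sum, ← Finset.sum_add_distrib, ← Finset.sum_add_distrib]
    apply Finset.sum_le_sum
    intro i _
    rw [hδstar i]
    exact key (l i) (u i) (s i) L lam (hlu i).1 (hlu i).2 hL hlam (δ i)
      (hδ i).1 (hδ i).2
end

section
/- Let n, m be positive integers and G : {1,…,n} → {1,…,m} a group assignment of coordinates. Let l, u ∈ ℝ^n with l_i ≤ 0 ≤ u_i for all i, let s ∈ ℝ^n, and let L > 0, λ > 0. Then the minimum over δ in the box [l,u] of (L/2)‖δ − s‖² + λ‖δ‖_{2,0} is attained and equals Σ_{j=1}^{m} min( (L/2)‖s_{G_j}‖² , λ + (L/2)‖(Π_{[l,u]}(s) − s)_{G_j}‖² ). -/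
lemma clamp_sq_le (l u s δ : ℝ) (hlu : l ≤ u) (hl : l ≤ δ) (hu : δ ≤ u) :
    (max l (min u s) - s) ^ 2 ≤ (δ - s) ^ 2 := by
  rcases le_total s l with h | h
  · rw [min_eq_right (h.trans hlu), max_eq_left h]
    nlinarith
  · rcases le_total u s with h2 | h2
    · rw [min_eq_left h2, max_eq_right hlu]
      nlinarith
    · rw [min_eq_right h2, max_eq_right h]
      simpa using sq_nonneg (δ - s)

lemma groupL20_eq_sum {n m : ℕ} (G : Fin n → Fin m) (δ : Fin n → ℝ) :
    (groupL20 G δ : ℝ) = ∑ j : Fin m, if (∃ i, G i = j ∧ δ i ≠ 0) then (1 : ℝ) else 0 := by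
  classical
  rw [groupL20, Nat.card_eq_fintype_card, Fintype.card_subtype, Finset.sum_boole]

/-- The minimum of the group-ℓ0-regularized box-constrained proximal problem is attained
and equals the sum over groups of the groupwise minima. -/
theorem group_l0_prox_min_value (n m : ℕ) (hn : 0 < n) (hm : 0 < m)
    (G : Fin n → Fin m)
    (l u s : Fin n → ℝ) (hlu : ∀ i, l i ≤ 0 ∧ 0 ≤ u i)
    (L lam : ℝ) (hL : 0 < L) (hlam : 0 < lam) :
    ∃ δstar : Fin n → ℝ, inBox l u δstar ∧
      (∀ δ : Fin n → ℝ, inBox l u δ →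
        L / 2 * (∑ i, (δstar i - s i) ^ 2) + lam * (groupL20 G δstar : ℝ) ≤
          L / 2 * (∑ i, (δ i - s i) ^ 2) + lam * (groupL20 G δ : ℝ)) ∧
      L / 2 * (∑ i, (δstar i - s i) ^ 2) + lam * (groupL20 G δstar : ℝ) =
        ∑ j : Fin m,
          min (L / 2 * ∑ i ∈ Finset.univ.filter (fun i => G i = j), (s i) ^ 2)
            (lam + L / 2 * ∑ i ∈ Finset.univ.filter (fun i => G i = j),
              (clampProj l u s i - s i) ^ 2) := by
  classical
  set c : Fin n → ℝ := clampProj l u s with hc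
  set fib : Fin m → Finset (Fin n) := fun j => Finset.univ.filter (fun i => G i = j) with hfib
  set A : Fin m → ℝ := fun j => L / 2 * ∑ i ∈ fib j, (s i) ^ 2 with hA
  set B : Fin m → ℝ := fun j => lam + L / 2 * ∑ i ∈ fib j, (c i - s i) ^ 2 with hB
  set δstar : Fin n → ℝ := fun i => if A (G i) ≤ B (G i) then 0 else c i with hδs
  have hluu : ∀ i, l i ≤ u i := fun i => (hlu i).1.trans (hlu i).2
  have hcbox : ∀ i, l i ≤ c i ∧ c i ≤ u i := by
    intro i
    refine ⟨le_max_left _ _, max_le (hluu i) (min_le_left _ _)⟩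
  have hbox : inBox l u δstar := by
    intro i
    simp only [hδs]
    split_ifs
    · exact ⟨(hlu i).1, (hlu i).2⟩
    · exact hcbox i
  have hmemfib : ∀ j, ∀ i, i ∈ fib j ↔ G i = j := by
    intro j i; simp [hfib]
  -- decomposition of the objective over groups
  have obj_eq : ∀ δ : Fin n → ℝ,
      L / 2 * (∑ i, (δ i - s i) ^ 2) + lam * (groupL20 G δ : ℝ)
      = ∑ j : Fin m, (L / 2 * ∑ i ∈ fib j, (δ i - s i) ^ 2
          + if (∃ i, G i = j ∧ δ i ≠ 0) then lam else 0) := by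
    intro δ
    have h1 : (∑ i, (δ i - s i) ^ 2)
        = ∑ j : Fin m, ∑ i ∈ fib j, (δ i - s i) ^ 2 :=
      (Finset.sum_fiberwise Finset.univ G (fun i => (δ i - s i) ^ 2)).symm
    rw [h1, groupL20_eq_sum, Finset.mul_sum, Finset.mul_sum, ← Finset.sum_add_distrib]
    refine Finset.sum_congr rfl fun j _ => ?_
    split_ifs <;> ring
  -- per-group lower bound
  have key_lb : ∀ δ : Fin n → ℝ, inBox l u δ → ∀ j : Fin m,
      min (A j) (B j) ≤ L / 2 * ∑ i ∈ fib j, (δ i - s i) ^ 2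
        + if (∃ i, G i = j ∧ δ i ≠ 0) then lam else 0 := by
    intro δ hδ j
    split_ifs with h
    · refine le_trans (min_le_right _ _) ?_
      have hsum : ∑ i ∈ fib j, (c i - s i) ^ 2 ≤ ∑ i ∈ fib j, (δ i - s i) ^ 2 :=
        Finset.sum_le_sum fun i _ =>
          clamp_sq_le (l i) (u i) (s i) (δ i) (hluu i) (hδ i).1 (hδ i).2
      have hL2 : (0:ℝ) ≤ L / 2 := by linarith
      have := mul_le_mul_of_nonneg_left hsum hL2
      simp only [hB]
      linarith
    · push_neg at h
      have hsum : ∑ i ∈ fib j, (δ i - s i) ^ 2 = ∑ i ∈ fib j, (s i) ^ 2 := by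
        refine Finset.sum_congr rfl fun i hi => ?_
        rw [h i ((hmemfib j i).1 hi)]
        ring
      rw [hsum, add_zero]
      exact min_le_left _ _
  -- per-group value at δstar
  have key_eq : ∀ j : Fin m,
      L / 2 * ∑ i ∈ fib j, (δstar i - s i) ^ 2
        + (if (∃ i, G i = j ∧ δstar i ≠ 0) then lam else 0) = min (A j) (B j) := by
    intro j
    by_cases hAB : A j ≤ B j
    · have hz : ∀ i ∈ fib j, δstar i = 0 := by
        intro i hi
        have hij : G i = j := (hmemfib j i).1 hi
        simp [hδs, hij, hAB]
      have hsum : ∑ i ∈ fib j, (δstar i - s i) ^ 2 = ∑ i ∈ fib j, (s i) ^ 2 := by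
        refine Finset.sum_congr rfl fun i hi => ?_
        rw [hz i hi]; ring
      have hne : ¬ ∃ i, G i = j ∧ δstar i ≠ 0 := by
        rintro ⟨i, hij, hne⟩
        exact hne (hz i ((hmemfib j i).2 hij))
      rw [if_neg hne, add_zero, hsum, min_eq_left hAB]
    · have hBA : B j < A j := lt_of_not_ge hAB
      have hGc : ∀ i ∈ fib j, δstar i = c i := by
        intro i hi
        have hij : G i = j := (hmemfib j i).1 hi
        simp [hδs, hij, hAB]
      have hsum : ∑ i ∈ fib j, (δstar i - s i) ^ 2 = ∑ i ∈ fib j, (c i - s i) ^ 2 :=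
        Finset.sum_congr rfl fun i hi => by rw [hGc i hi]
      have hex : ∃ i, G i = j ∧ δstar i ≠ 0 := by
        by_contra hno
        push_neg at hno
        have hc0 : ∀ i ∈ fib j, c i = 0 := by
          intro i hi
          have hij : G i = j := (hmemfib j i).1 hi
          have := hno i hij
          rwa [hGc i hi] at this
        have hBeq : B j = lam + A j := by
          simp only [hB, hA]
          congr 1
          congr 1
          refine Finset.sum_congr rfl fun i hi => ?_
          rw [hc0 i hi]; ring
        rw [hBeq] at hBA
        linarith
      rw [if_pos hex, hsum, min_eq_right hBA.le]
      simp only [hB]; ring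
  refine ⟨δstar, hbox, ?_, ?_⟩
  · intro δ hδ
    rw [obj_eq δstar, obj_eq δ]
    refine Finset.sum_le_sum fun j _ => ?_
    rw [key_eq j]
    exact key_lb δ hδ j
  · rw [obj_eq δstar]
    exact Finset.sum_congr rfl fun j _ => key_eq j
end
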